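/- If a TBox with k existential axioms is RCA_n witnessed by an overchase containing no n-cyclic term, then every term in its overchase has depth at most n·k, and hence the overchase is finite. -/

import Mathlib

/-!
Along a term, the subterms `fn f s` headed by one symbol `f` form a chain of proper subterms,
so a term in which some symbol occurs more than `n` times is `n`-cyclic. Without `n`-cyclic
terms each of the `k` symbols occurs at most `n` times, whence depth at most `n * k`. There
are finitely many terms of bounded depth, so with finitely many predicates and bounded arity
there are finitely many facts over them.
-/

/-- Terms over `k` unary function symbols and a single constant. -/
inductive UTerm (k : ℕ) : Type
  | const : UTerm k
  | fn : Fin k → UTerm k → UTerm k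

namespace UTerm

def dep {k : ℕ} : UTerm k → ℕ
  | const => 0
  | fn _ t => 1 + dep t

inductive Subterm {k : ℕ} : UTerm k → UTerm k → Prop
  | refl (t : UTerm k) : Subterm t t
  | fn {t s : UTerm k} {f : Fin k} : Subterm t s → Subterm t (UTerm.fn f s)

def ProperSubterm {k : ℕ} (s t : UTerm k) : Prop :=
  Subterm s t ∧ s ≠ t

def NCyclic {k : ℕ} (n : ℕ) (t : UTerm k) : Prop :=
  ∃ (f : Fin k) (s : ℕ → UTerm k),
    Subterm (UTerm.fn f (s (n + 1))) t ∧
    ∀ i, 1 ≤ i → i ≤ n → ProperSubterm (UTerm.fn f (s i)) (UTerm.fn f (s (i + 1)))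

end UTerm

/-- A term occurs in a set of facts if it appears in the argument list of some fact. -/
def Occurs {P : Type} {k : ℕ} (O : Set (P × List (UTerm k))) (t : UTerm k) : Prop :=
  ∃ x ∈ O, t ∈ x.2

namespace UTerm

variable {k : ℕ}

lemma dep_le_dep_of_subterm {s t : UTerm k} (h : Subterm s t) : dep s ≤ dep t := by
  induction h with
  | refl => exact le_rfl
  | fn _ ih => simp only [dep]; omega

lemma properSubterm_fn_of_subterm {f : Fin k} {s t : UTerm k} (h : Subterm (fn f s) t) :
    ProperSubterm (fn f s) (fn f t) := by
  refine ⟨Subterm.fn h, fun he => ?_⟩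
  have := dep_le_dep_of_subterm h
  rw [he] at this
  simp only [dep] at this
  omega

/-- The arguments `s` of the subterms `fn f s` of `t`, innermost first. -/
def args (f : Fin k) : UTerm k → List (UTerm k)
  | const => []
  | fn g s => args f s ++ if g = f then [s] else []

lemma subterm_of_mem_args {f : Fin k} {s t : UTerm k} (h : s ∈ args f t) :
    Subterm (fn f s) t := by
  induction t with
  | const => simp [args] at h
  | fn g u ih =>
    simp only [args, List.mem_append] at h
    rcases h with h | h
    · exact Subterm.fn (ih h)
    · split_ifs at h with hg
      · simp only [List.mem_singleton] at h
        subst hg h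
        exact Subterm.refl _
      · simp at h

lemma pairwise_args (f : Fin k) (t : UTerm k) :
    (args f t).Pairwise fun a b => ProperSubterm (fn f a) (fn f b) := by
  induction t with
  | const => exact List.Pairwise.nil
  | fn g u ih =>
    refine List.pairwise_append.mpr ⟨ih, ?_, fun a ha b hb => ?_⟩
    · split_ifs <;> simp
    · split_ifs at hb <;> simp only [List.mem_singleton, List.not_mem_nil] at hb
      subst hb
      exact properSubterm_fn_of_subterm (subterm_of_mem_args ha)

lemma nCyclic_of_lt_length_args {n : ℕ} {f : Fin k} {t : UTerm k}
    (h : n < (args f t).length) : NCyclic n t := by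
  set L := args f t
  refine ⟨f, fun i => L.getD (i - 1) const, ?_, fun i hi _ => ?_⟩
  · simp only [Nat.add_sub_cancel, List.getD_eq_getElem _ _ h]
    exact subterm_of_mem_args (List.getElem_mem h)
  · simp only [Nat.add_sub_cancel, List.getD_eq_getElem _ _ (by omega : i < L.length),
      List.getD_eq_getElem _ _ (by omega : i - 1 < L.length)]
    exact List.pairwise_iff_getElem.mp (pairwise_args f t) _ _ _ _ (by omega)

lemma dep_eq_sum_length_args (t : UTerm k) : dep t = ∑ f : Fin k, (args f t).length := by
  induction t with
  | const => simp [dep, args]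
  | fn g u ih =>
    simp only [dep, args, List.length_append, ih, Finset.sum_add_distrib, add_comm 1]
    congr 1
    simp [apply_ite List.length]

lemma dep_le_mul_of_not_nCyclic {n : ℕ} {t : UTerm k} (h : ¬ NCyclic n t) : dep t ≤ n * k :=
  calc dep t = ∑ f : Fin k, (args f t).length := dep_eq_sum_length_args t
    _ ≤ ∑ _f : Fin k, n :=
      Finset.sum_le_sum fun _ _ => le_of_not_gt fun hlt => h (nCyclic_of_lt_length_args hlt)
    _ = n * k := by simp [mul_comm]

def toList : UTerm k → List (Fin k)
  | const => []
  | fn f t => f :: toList t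

lemma toList_injective : Function.Injective (toList (k := k)) := by
  intro s
  induction s with
  | const => intro t h; cases t <;> simp_all [toList]
  | fn f s ih =>
    intro t h
    cases t with
    | const => simp [toList] at h
    | fn g t =>
      simp only [toList, List.cons.injEq] at h
      rw [h.1, ih h.2]

lemma length_toList (t : UTerm k) : (toList t).length = dep t := by
  induction t with
  | const => rfl
  | fn f t ih => simp [toList, dep, ih, add_comm]

lemma finite_setOf_dep_le (d : ℕ) : {t : UTerm k | dep t ≤ d}.Finite :=
  ((List.finite_length_le (Fin k) d).preimage toList_injective.injOn).subset
    fun t ht => by simpa [length_toList] using ht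

end UTerm

lemma Set.Finite.setOf_list_length_le {α : Type*} {s : Set α} (hs : s.Finite) (m : ℕ) :
    {l : List α | l.length ≤ m ∧ ∀ a ∈ l, a ∈ s}.Finite := by
  have : Finite s := hs
  refine ((List.finite_length_le s m).image (List.map Subtype.val)).subset ?_
  rintro l ⟨hlen, hmem⟩
  exact ⟨l.attach.map fun a => ⟨a.1, hmem a.1 a.2⟩, by simpa using hlen, by simp⟩

theorem rca_overchase_finite_general {P : Type} [Fintype P] {k n : ℕ}
    (O : Set (P × List (UTerm k)))
    (harity : ∀ x ∈ O, x.2.length ≤ 2)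
    (hacyclic : ∀ t : UTerm k, Occurs O t → ¬ UTerm.NCyclic n t) :
    (∀ t : UTerm k, Occurs O t → UTerm.dep t ≤ n * k) ∧ O.Finite := by
  have hdep : ∀ t, Occurs O t → UTerm.dep t ≤ n * k := fun t ht =>
    UTerm.dep_le_mul_of_not_nCyclic (hacyclic t ht)
  refine ⟨hdep, ?_⟩
  have hargs := (UTerm.finite_setOf_dep_le (k := k) (n * k)).setOf_list_length_le 2
  exact (Set.finite_univ.prod hargs).subset fun x hx =>
    ⟨Set.mem_univ _, harity x hx, fun t ht => hdep t ⟨x, hx, ht⟩⟩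

theorem rca_overchase_finite {P : Type} [Fintype P] {k n : ℕ} (hn : 1 ≤ n)
    (O : Set (P × List (UTerm k)))
    (harity : ∀ x ∈ O, x.2.length ≤ 2)
    (hclosed : ∀ t : UTerm k, Occurs O t → ∀ s : UTerm k, UTerm.Subterm s t → Occurs O s)
    (hacyclic : ∀ t : UTerm k, Occurs O t → ¬ UTerm.NCyclic n t) :
    (∀ t : UTerm k, Occurs O t → UTerm.dep t ≤ n * k) ∧ O.Finite :=
  rca_overchase_finite_general O harity hacyclic
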